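/- arXiv:2009.07344 — 2 statements merged into one kernel-verified Lean document; each statement's English description precedes it below -/
import Mathlib

section
/- A finite subset ξ ⊆ ℤ×ℤ is a ribbon if and only if there exists an N/E lattice path (z^1,...,z^k) with ξ = {z^1,...,z^k} and k = |ξ|. -/
open Finset

abbrev Node : Type := ℤ × ℤ

/-- `v` is weakly southeast of `u` (product order). -/
def SE (u v : Node) : Prop := u.1 ≤ v.1 ∧ u.2 ≤ v.2

/-- `v` is weakly northeast of `u` (`u ↗ v`). -/
def NEr (u v : Node) : Prop := v.1 ≤ u.1 ∧ u.2 ≤ v.2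

/-- `v` is strictly northeast of `u` (`u ⇗ v`). -/
def SNE (u v : Node) : Prop := v.1 < u.1 ∧ u.2 < v.2

def IsSkew (τ : Finset Node) : Prop :=
  ∀ u ∈ τ, ∀ w ∈ τ, ∀ v : Node, SE u v → SE v w → v ∈ τ

def Adj (u v : Node) : Prop :=
  v = u + (1, 0) ∨ v = u + (-1, 0) ∨ v = u + (0, 1) ∨ v = u + (0, -1)

def PathIn (τ : Finset Node) (u v : Node) : Prop :=
  Relation.ReflTransGen (fun a b => a ∈ τ ∧ b ∈ τ ∧ Adj a b) u v

def IsConnectedShape (τ : Finset Node) : Prop :=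
  ∀ u ∈ τ, ∀ v ∈ τ, PathIn τ u v

def Cornered (τ : Finset Node) : Prop :=
  (∀ u ∈ τ, ∀ u' ∈ τ, (u + (1, 0) ∉ τ ∧ u + (0, -1) ∉ τ) →
      (u' + (1, 0) ∉ τ ∧ u' + (0, -1) ∉ τ) → u = u') ∧
  (∀ v ∈ τ, ∀ v' ∈ τ, (v + (-1, 0) ∉ τ ∧ v + (0, 1) ∉ τ) →
      (v' + (-1, 0) ∉ τ ∧ v' + (0, 1) ∉ τ) → v = v')

def DiagConvex (τ : Finset Node) : Prop :=
  ∀ u ∈ τ, ∀ w ∈ τ, ∀ v : Node,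
    u.2 - u.1 = v.2 - v.1 → v.2 - v.1 = w.2 - w.1 → SE u v → SE v w → v ∈ τ

def Thin (τ : Finset Node) : Prop :=
  ∀ u ∈ τ, ∀ v ∈ τ, u.2 - u.1 = v.2 - v.1 → u = v

def IsRibbon (ξ : Finset Node) : Prop :=
  ξ.Nonempty ∧ IsSkew ξ ∧ IsConnectedShape ξ ∧ Thin ξ

def MaxSW (τ : Finset Node) (u : Node) : Prop :=
  u ∈ τ ∧ ∀ v ∈ τ, NEr v u → v = u

def MaxNE (τ : Finset Node) (v : Node) : Prop :=
  v ∈ τ ∧ ∀ w ∈ τ, NEr v w → w = v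

def IsNEPath (z : ℕ → Node) (k : ℕ) : Prop :=
  ∀ i, i + 1 < k → z (i + 1) = z i + (-1, 0) ∨ z (i + 1) = z i + (0, 1)

def IsSEPath (z : ℕ → Node) (k : ℕ) : Prop :=
  ∀ i, i + 1 < k → z (i + 1) = z i + (1, 0) ∨ z (i + 1) = z i + (0, 1)

def SERemovable (τ μ : Finset Node) : Prop :=
  μ ⊆ τ ∧ ∀ u ∈ μ, ∀ v ∈ τ \ μ, ¬ SE u v

lemma adj_diag {a b : Node} (h : Adj a b) :
    b.2 - b.1 = (a.2 - a.1) + 1 ∨ b.2 - b.1 = (a.2 - a.1) - 1 := by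
  rcases h with rfl | rfl | rfl | rfl <;> simp [Prod.fst_add, Prod.snd_add] <;> omega

lemma path_diag {ξ : Finset Node} {a b : Node} (ha : a ∈ ξ) (h : PathIn ξ a b) :
    ∀ n : ℤ, ((a.2 - a.1 ≤ n ∧ n ≤ b.2 - b.1) ∨ (b.2 - b.1 ≤ n ∧ n ≤ a.2 - a.1)) →
      ∃ w ∈ ξ, w.2 - w.1 = n := by
  induction h with
  | refl => intro n hn; exact ⟨a, ha, by omega⟩
  | @tail b c hab hbc ih =>
    intro n hn
    have hd := adj_diag hbc.2.2
    by_cases hm : (a.2 - a.1 ≤ n ∧ n ≤ b.2 - b.1) ∨ (b.2 - b.1 ≤ n ∧ n ≤ a.2 - a.1)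
    · exact ih n hm
    · exact ⟨c, hbc.2.1, by omega⟩

lemma ribbon_step {ξ : Finset Node} (hskew : IsSkew ξ) (hthin : Thin ξ)
    {u v : Node} (hu : u ∈ ξ) (hv : v ∈ ξ) (hd : v.2 - v.1 = (u.2 - u.1) + 1) :
    v = u + (-1, 0) ∨ v = u + (0, 1) := by
  rcases lt_trichotomy u.1 v.1 with h1 | h1 | h1
  · exfalso
    have hw : (u.1, u.2 + 1) ∈ ξ :=
      hskew u hu v hv (u.1, u.2 + 1) ⟨by simp, by simp⟩ ⟨by simpa using h1.le, by simp; omega⟩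
    have h2 := hthin (u.1, u.2 + 1) hw v hv (by simp; omega)
    rw [Prod.ext_iff] at h2
    simp at h2
    omega
  · right
    rw [Prod.ext_iff]
    simp [Prod.fst_add, Prod.snd_add]
    omega
  · rcases eq_or_lt_of_le (by omega : v.1 ≤ u.1 - 1) with h2 | h2
    · left
      rw [Prod.ext_iff]
      simp [Prod.fst_add, Prod.snd_add]
      omega
    · exfalso
      have hw : ((u.1 - 1 : ℤ), u.2) ∈ ξ :=
        hskew v hv u hu (u.1 - 1, u.2) ⟨by simp; omega, by simp; omega⟩ ⟨by simp, by simp⟩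
      have h3 := hthin (u.1 - 1, u.2) hw v hv (by simp; omega)
      rw [Prod.ext_iff] at h3
      simp at h3
      omega

lemma ne_mono {z : ℕ → Node} {k : ℕ} (hz : IsNEPath z k) (i : ℕ) :
    ∀ t, i + t < k → (z (i + t)).1 ≤ (z i).1 ∧ (z i).2 ≤ (z (i + t)).2 ∧
      (z (i + t)).2 - (z (i + t)).1 = ((z i).2 - (z i).1) + t := by
  intro t
  induction t with
  | zero => intro _; simp
  | succ t ih =>
    intro h
    obtain ⟨h1, h2, h3⟩ := ih (by omega)
    have hstep := hz (i + t) (by omega)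
    have he : i + (t + 1) = (i + t) + 1 := by omega
    rw [he]
    rcases hstep with h4 | h4 <;> rw [h4] <;>
      simp [Prod.fst_add, Prod.snd_add] <;> push_cast <;> omega

lemma ne_east {z : ℕ → Node} {k : ℕ} (hz : IsNEPath z k) (i : ℕ) :
    ∀ t, i + t < k → (z (i + t)).1 = (z i).1 →
      ∀ s, s ≤ t → z (i + s) = z i + (0, (s : ℤ)) := by
  intro t ht hrow
  have hrows : ∀ s, s ≤ t → (z (i + s)).1 = (z i).1 := by
    intro s hs
    have m1 := (ne_mono hz i s (by omega)).1
    have m2 := (ne_mono hz (i + s) (t - s) (by omega)).1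
    have he : i + s + (t - s) = i + t := by omega
    rw [he] at m2
    omega
  intro s
  induction s with
  | zero => intro _; rw [Prod.ext_iff]; simp
  | succ s ih =>
    intro hs
    have h5 := ih (by omega)
    have hstep := hz (i + s) (by omega)
    have he : i + (s + 1) = (i + s) + 1 := by omega
    have hr1 := hrows (s + 1) hs
    have hr0 := hrows s (by omega)
    rcases hstep with h4 | h4
    · exfalso
      rw [he, h4] at hr1
      simp [Prod.fst_add] at hr1
      omega
    · rw [he, h4, h5]
      rw [Prod.ext_iff]
      simp [Prod.fst_add, Prod.snd_add]
      push_cast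
      omega

lemma ne_north {z : ℕ → Node} {k : ℕ} (hz : IsNEPath z k) (i : ℕ) :
    ∀ t, i + t < k → (z (i + t)).2 = (z i).2 →
      ∀ s, s ≤ t → z (i + s) = z i + (-(s : ℤ), 0) := by
  intro t ht hcol
  have hcols : ∀ s, s ≤ t → (z (i + s)).2 = (z i).2 := by
    intro s hs
    have m1 := (ne_mono hz i s (by omega)).2.1
    have m2 := (ne_mono hz (i + s) (t - s) (by omega)).2.1
    have he : i + s + (t - s) = i + t := by omega
    rw [he] at m2
    omega
  intro s
  induction s with
  | zero => intro _; rw [Prod.ext_iff]; simp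
  | succ s ih =>
    intro hs
    have h5 := ih (by omega)
    have hstep := hz (i + s) (by omega)
    have he : i + (s + 1) = (i + s) + 1 := by omega
    have hc1 := hcols (s + 1) hs
    have hc0 := hcols s (by omega)
    rcases hstep with h4 | h4
    · rw [he, h4, h5]
      rw [Prod.ext_iff]
      simp [Prod.fst_add, Prod.snd_add]
      push_cast
      omega
    · exfalso
      rw [he, h4] at hc1
      simp [Prod.snd_add] at hc1
      omega

lemma adj_symm {u v : Node} (h : Adj u v) : Adj v u := by
  rcases h with rfl | rfl | rfl | rfl
  · right; left; rw [Prod.ext_iff]; simp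
  · left; rw [Prod.ext_iff]; simp
  · right; right; right; rw [Prod.ext_iff]; simp
  · right; right; left; rw [Prod.ext_iff]; simp

lemma pathIn_symm {τ : Finset Node} {u v : Node} (h : PathIn τ u v) : PathIn τ v u := by
  induction h with
  | refl => exact Relation.ReflTransGen.refl
  | @tail b c hab hbc ih =>
    exact Relation.ReflTransGen.head ⟨hbc.2.1, hbc.1, adj_symm hbc.2.2⟩ ih

theorem stmt6 (ξ : Finset Node) :
    IsRibbon ξ ↔
      ∃ (k : ℕ) (z : ℕ → Node), 1 ≤ k ∧ k = ξ.card ∧ IsNEPath z k ∧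
        ξ = (Finset.range k).image z := by
  constructor
  · rintro ⟨hne, hskew, hconn, hthin⟩
    classical
    set k := ξ.card with hk
    have hk1 : 1 ≤ k := Finset.card_pos.mpr hne
    set D := ξ.image (fun u : Node => u.2 - u.1) with hD
    have hDne : D.Nonempty := hne.image _
    have hDcard : D.card = k := Finset.card_image_of_injOn (fun u hu v hv h => hthin u hu v hv h)
    set d0 := D.min' hDne with hd0
    set dm := D.max' hDne with hdm
    have hIcc : ∀ n : ℤ, d0 ≤ n → n ≤ dm → n ∈ D := by
      intro n hn1 hn2
      obtain ⟨u0, hu0, hu0d⟩ := Finset.mem_image.mp (D.min'_mem hDne)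
      obtain ⟨u1, hu1, hu1d⟩ := Finset.mem_image.mp (D.max'_mem hDne)
      obtain ⟨w, hw, hwd⟩ := path_diag hu0 (hconn u0 hu0 u1 hu1) n
        (Or.inl ⟨by rw [hu0d]; exact hn1, by rw [hu1d]; exact hn2⟩)
      exact Finset.mem_image.mpr ⟨w, hw, hwd⟩
    have hDeq : D = Finset.Icc d0 dm := by
      apply Finset.Subset.antisymm
      · intro n hn
        exact Finset.mem_Icc.mpr ⟨D.min'_le n hn, D.le_max' n hn⟩
      · intro n hn
        obtain ⟨h1, h2⟩ := Finset.mem_Icc.mp hn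
        exact hIcc n h1 h2
    have hd0dm : d0 ≤ dm := D.min'_le dm (D.max'_mem hDne)
    have hkcard : dm = d0 + k - 1 := by
      have := hDcard
      rw [hDeq, Int.card_Icc] at this
      omega
    have hex : ∀ i : ℕ, ∃ u : Node, i < k → u ∈ ξ ∧ u.2 - u.1 = d0 + i := by
      intro i
      by_cases hi : i < k
      · have hmem : (d0 + (i : ℤ)) ∈ D := by
          apply hIcc
          · omega
          · have : (i : ℤ) < k := by exact_mod_cast hi
            omega
        obtain ⟨u, hu, hud⟩ := Finset.mem_image.mp hmem
        exact ⟨u, fun _ => ⟨hu, hud⟩⟩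
      · exact ⟨hne.choose, fun h => absurd h hi⟩
    choose z hzs using hex
    have hzmem : ∀ i, i < k → z i ∈ ξ := fun i h => (hzs i h).1
    have hzd : ∀ i, i < k → (z i).2 - (z i).1 = d0 + i := fun i h => (hzs i h).2
    refine ⟨k, z, hk1, rfl, ?_, ?_⟩
    · intro i hi
      apply ribbon_step hskew hthin (hzmem i (by omega)) (hzmem (i+1) hi)
      have e1 := hzd i (by omega)
      have e2 := hzd (i+1) hi
      push_cast at e2
      omega
    · apply Finset.Subset.antisymm
      · intro u hu
        have hmem : (u.2 - u.1) ∈ D := Finset.mem_image.mpr ⟨u, hu, rfl⟩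
        rw [hDeq, Finset.mem_Icc] at hmem
        set i := (u.2 - u.1 - d0).toNat with hi
        have hi0 : (i : ℤ) = u.2 - u.1 - d0 := Int.toNat_of_nonneg (by omega)
        have hik : i < k := by omega
        have := hzd i hik
        have heq : z i = u := hthin (z i) (hzmem i hik) u hu (by omega)
        exact Finset.mem_image.mpr ⟨i, Finset.mem_range.mpr hik, heq⟩
      · intro u hu
        obtain ⟨i, hi, rfl⟩ := Finset.mem_image.mp hu
        exact hzmem i (Finset.mem_range.mp hi)
  · rintro ⟨k, z, hk1, hkcard, hz, rfl⟩
    have hmem : ∀ u : Node, u ∈ (Finset.range k).image z ↔ ∃ i, i < k ∧ z i = u := by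
      intro u
      simp [Finset.mem_image, Finset.mem_range]
    have hzmem : ∀ i, i < k → z i ∈ (Finset.range k).image z := by
      intro i hi
      exact (hmem (z i)).mpr ⟨i, hi, rfl⟩
    refine ⟨⟨z 0, hzmem 0 (by omega)⟩, ?_, ?_, ?_⟩
    · -- IsSkew
      intro u hu w hw v huv hvw
      obtain ⟨i, hi, rfl⟩ := (hmem u).mp hu
      obtain ⟨j, hj, rfl⟩ := (hmem w).mp hw
      rcases le_or_gt i j with hij | hij
      · have m := ne_mono hz i (j - i) (by omega)
        have he : i + (j - i) = j := by omega
        rw [he] at m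
        have hv1 : v.1 = (z i).1 := by
          have := huv.1
          have := hvw.1
          omega
        have hrow : (z j).1 = (z i).1 := by
          have := huv.1
          have := hvw.1
          omega
        have hcol : (z j).2 = (z i).2 + (j - i : ℕ) := by
          obtain ⟨m1, m2, m3⟩ := m
          omega
        set s := (v.2 - (z i).2).toNat with hs
        have hs0 : (s : ℤ) = v.2 - (z i).2 := by
          have := huv.2
          exact Int.toNat_of_nonneg (by omega)
        have hst : s ≤ j - i := by
          have := hvw.2
          have hji : ((j - i : ℕ) : ℤ) = (j : ℤ) - i := by push_cast; omega
          omega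
        have heast := ne_east hz i (j - i) (by omega) (by rw [he]; exact hrow) s hst
        have : z (i + s) = v := by
          rw [heast, Prod.ext_iff]
          simp [Prod.fst_add, Prod.snd_add]
          omega
        rw [← this]
        exact hzmem (i + s) (by omega)
      · have m := ne_mono hz j (i - j) (by omega)
        have he : j + (i - j) = i := by omega
        rw [he] at m
        have hv2 : v.2 = (z i).2 := by
          have := huv.2
          have := hvw.2
          have := m.2.1
          omega
        have hcol : (z i).2 = (z j).2 := by
          have := huv.2
          have := hvw.2
          have := m.2.1
          omega
        have hrow : (z i).1 = (z j).1 - (i - j : ℕ) := by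
          obtain ⟨m1, m2, m3⟩ := m
          omega
        set s := ((z j).1 - v.1).toNat with hs
        have hs0 : (s : ℤ) = (z j).1 - v.1 := by
          have := hvw.1
          exact Int.toNat_of_nonneg (by omega)
        have hst : s ≤ i - j := by
          have := huv.1
          have hji : ((i - j : ℕ) : ℤ) = (i : ℤ) - j := by push_cast; omega
          omega
        have hnorth := ne_north hz j (i - j) (by omega) (by rw [he]; exact hcol) s hst
        have : z (j + s) = v := by
          rw [hnorth, Prod.ext_iff]
          simp [Prod.fst_add, Prod.snd_add]
          constructor
          · omega
          · omega
        rw [← this]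
        exact hzmem (j + s) (by omega)
    · -- connected
      have hchain : ∀ j, j < k → PathIn ((Finset.range k).image z) (z 0) (z j) := by
        intro j
        induction j with
        | zero => intro _; exact Relation.ReflTransGen.refl
        | succ j ih =>
          intro hj
          refine Relation.ReflTransGen.tail (ih (by omega)) ?_
          refine ⟨hzmem j (by omega), hzmem (j+1) hj, ?_⟩
          rcases hz j hj with h | h
          · right; left; exact h
          · right; right; left; exact h
      intro u hu v hv
      obtain ⟨i, hi, rfl⟩ := (hmem u).mp hu
      obtain ⟨j, hj, rfl⟩ := (hmem v).mp hv
      exact Relation.ReflTransGen.trans (pathIn_symm (hchain i hi)) (hchain j hj)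
    · -- thin
      intro u hu v hv hd
      obtain ⟨i, hi, rfl⟩ := (hmem u).mp hu
      obtain ⟨j, hj, rfl⟩ := (hmem v).mp hv
      have mi := (ne_mono hz 0 i (by omega)).2.2
      have mj := (ne_mono hz 0 j (by omega)).2.2
      simp only [Nat.zero_add] at mi mj
      have : i = j := by omega
      rw [this]
end

section
/- Let τ ⊆ ℤ×ℤ be a skew shape. Define Rem_τ to be the set of pairs (u,v) of nodes of τ lying in the same connected component of τ with u ↗ v, u+(1,0) ∉ τ and v+(0,1) ∉ τ; for (u,v) ∈ Rem_τ set ξ^τ_{u,v} = {w ∈ τ : u ↗ w ↗ v and w+(1,1) ∉ τ}. Then {ξ^τ_{u,v} : (u,v) ∈ Rem_τ} is exactly the set of SE-removable ribbons in τ. -/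
open Finset

/-!
In a skew shape `τ`, `w + (1, 1) ∉ τ` says that `w` is the southeast-most node of `τ` on its
diagonal. An SE-removable ribbon spans the diagonals from its southwest end `u` to its northeast
end `v`, and removability forces its node on each of them to be the southeast-most node of `τ`
there. Conversely, when `u` and `v` are joined in `τ`, a path between them crosses every diagonal
in between, the southeast-most nodes on these diagonals form a thin skew shape, and a thin skew
shape meeting a run of consecutive diagonals is connected because its nodes on adjacent diagonals
are adjacent cells.
-/

section SkewShapes

variable {τ μ : Finset Node}

lemma IsSkew.add_mem (hτ : IsSkew τ) {a b : Node} (ha : a ∈ τ) (hb : b ∈ τ) {x y : ℤ}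
    (hx : 0 ≤ x) (hy : 0 ≤ y) (hxb : a.1 + x ≤ b.1) (hyb : a.2 + y ≤ b.2) :
    a + (x, y) ∈ τ :=
  hτ a ha b hb _ ⟨by simpa using hx, by simpa using hy⟩ ⟨by simpa using hxb, by simpa using hyb⟩

lemma IsSkew.add_one_one_mem (hτ : IsSkew τ) {a b : Node} (ha : a ∈ τ) (hb : b ∈ τ)
    (h₁ : a.1 < b.1) (h₂ : a.2 < b.2) : a + (1, 1) ∈ τ :=
  hτ.add_mem ha hb zero_le_one zero_le_one h₁ h₂

lemma Thin.add_one_one_not_mem (ht : Thin μ) {w : Node} (hw : w ∈ μ) : w + (1, 1) ∉ μ := by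
  intro h
  have := congrArg Prod.fst (ht w hw _ h (by simp))
  simp at this

lemma thin_of_add_one_one_not_mem (hτ : IsSkew τ) (hsub : μ ⊆ τ)
    (h : ∀ w ∈ μ, w + (1, 1) ∉ τ) : Thin μ := by
  intro w hw w' hw' hd
  rcases lt_trichotomy w.1 w'.1 with hlt | heq | hgt
  · exact absurd (hτ.add_one_one_mem (hsub hw) (hsub hw') hlt (by omega)) (h w hw)
  · exact Prod.ext heq (by omega)
  · exact absurd (hτ.add_one_one_mem (hsub hw') (hsub hw) hgt (by omega)) (h w' hw')

lemma Thin.nEr_of_diag_le (ht : Thin μ) (hs : IsSkew μ) {a b : Node} (ha : a ∈ μ) (hb : b ∈ μ)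
    (hd : a.2 - a.1 ≤ b.2 - b.1) : NEr a b := by
  by_contra hab
  rcases not_and_or.1 hab with h | h
  · exact ht.add_one_one_not_mem ha (hs.add_one_one_mem ha hb (by omega) (by omega))
  · exact ht.add_one_one_not_mem hb (hs.add_one_one_mem hb ha (by omega) (by omega))

lemma exists_mem_diag_eq_add_one_one_not_mem {m : Node} (hm : m ∈ τ) :
    ∃ z ∈ τ, z.2 - z.1 = m.2 - m.1 ∧ z + (1, 1) ∉ τ := by
  classical
  obtain ⟨z, hz, hzmax⟩ := (τ.filter (fun w => w.2 - w.1 = m.2 - m.1)).exists_max_image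
    Prod.fst ⟨m, mem_filter.2 ⟨hm, rfl⟩⟩
  rw [mem_filter] at hz
  refine ⟨z, hz.1, hz.2, fun h => ?_⟩
  have := hzmax _ (mem_filter.2 ⟨h, by simp [← hz.2]⟩)
  simp at this

lemma SERemovable.mem_of_se (h : SERemovable τ μ) {w c : Node} (hw : w ∈ μ) (hc : c ∈ τ)
    (hwc : SE w c) : c ∈ μ := by
  by_contra hcμ
  exact h.2 w hw c (mem_sdiff.2 ⟨hc, hcμ⟩) hwc

lemma SERemovable.isSkew (hτ : IsSkew τ) (h : SERemovable τ μ) : IsSkew μ :=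
  fun w hw _ hw' c hwc hcw' => h.mem_of_se hw (hτ w (h.1 hw) _ (h.1 hw') c hwc hcw') hwc

end SkewShapes

section Paths

variable {τ : Finset Node}

lemma Adj.symm {a b : Node} (h : Adj a b) : Adj b a := by
  rcases h with rfl | rfl | rfl | rfl <;> simp [Adj, Prod.ext_iff]

lemma Adj.diag {a b : Node} (h : Adj a b) :
    b.2 - b.1 = a.2 - a.1 + 1 ∨ b.2 - b.1 = a.2 - a.1 - 1 := by
  rcases h with rfl | rfl | rfl | rfl <;> simp only [Prod.fst_add, Prod.snd_add] <;> omega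

lemma PathIn.symm {a b : Node} (h : PathIn τ a b) : PathIn τ b a := by
  induction h with
  | refl => exact .refl
  | tail _ hstep ih => exact .head ⟨hstep.2.1, hstep.1, hstep.2.2.symm⟩ ih

lemma PathIn.mono {σ : Finset Node} (hστ : σ ⊆ τ) {a b : Node} (h : PathIn σ a b) :
    PathIn τ a b := by
  induction h with
  | refl => exact .refl
  | tail _ hstep ih => exact ih.tail ⟨hστ hstep.1, hστ hstep.2.1, hstep.2.2⟩

lemma PathIn.exists_mem_diag_eq {a b : Node} (h : PathIn τ a b) (ha : a ∈ τ) {d : ℤ}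
    (hda : a.2 - a.1 ≤ d) (hdb : d ≤ b.2 - b.1) : ∃ m ∈ τ, m.2 - m.1 = d := by
  induction h with
  | refl => exact ⟨a, ha, by omega⟩
  | @tail c b _ hstep ih =>
    by_cases hd : d = b.2 - b.1
    · exact ⟨b, hstep.2.1, hd.symm⟩
    · exact ih (by rcases hstep.2.2.diag with h | h <;> omega)

lemma Thin.adj_of_diag_eq_add_one {μ : Finset Node} (ht : Thin μ) (hs : IsSkew μ) {z z' : Node}
    (hz : z ∈ μ) (hz' : z' ∈ μ) (hd : z'.2 - z'.1 = z.2 - z.1 + 1) : Adj z z' := by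
  obtain ⟨h₁, h₂⟩ := ht.nEr_of_diag_le hs hz hz' (by omega)
  simp only [Adj, Prod.ext_iff, Prod.fst_add, Prod.snd_add]
  omega

lemma Thin.isConnectedShape {μ : Finset Node} (ht : Thin μ) (hs : IsSkew μ)
    (hdiag : ∀ a ∈ μ, ∀ b ∈ μ, ∀ d : ℤ, a.2 - a.1 ≤ d → d ≤ b.2 - b.1 → ∃ z ∈ μ, z.2 - z.1 = d) :
    IsConnectedShape μ := by
  suffices h : ∀ a ∈ μ, ∀ b ∈ μ, a.2 - a.1 ≤ b.2 - b.1 → PathIn μ a b by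
    intro a ha b hb
    rcases le_total (a.2 - a.1) (b.2 - b.1) with hab | hba
    · exact h a ha b hb hab
    · exact (h b hb a ha hba).symm
  intro a ha b hb hab
  have key : ∀ d, a.2 - a.1 ≤ d → d ≤ b.2 - b.1 → ∀ z ∈ μ, z.2 - z.1 = d → PathIn μ a z := by
    intro d hd
    induction d, hd using Int.leInduction with
    | base => intro _ z hz hzd; rw [ht a ha z hz hzd.symm]; exact .refl
    | succ d hd ih =>
      intro hdb z hz hzd
      obtain ⟨y, hy, hyd⟩ := hdiag a ha b hb d hd (by omega)
      exact (ih (by omega) y hy hyd).tail ⟨hy, hz, ht.adj_of_diag_eq_add_one hs hy hz (by omega)⟩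
  exact key _ hab le_rfl b hb rfl

end Paths

open Classical in
noncomputable def ribbonBetween (τ : Finset Node) (u v : Node) : Finset Node :=
  τ.filter (fun w => NEr u w ∧ NEr w v ∧ w + (1, 1) ∉ τ)

section Ribbons

variable {τ μ : Finset Node} {u v : Node}

lemma mem_ribbonBetween {w : Node} :
    w ∈ ribbonBetween τ u v ↔ w ∈ τ ∧ NEr u w ∧ NEr w v ∧ w + (1, 1) ∉ τ := by
  simp [ribbonBetween]

lemma ribbonBetween_subset : ribbonBetween τ u v ⊆ τ := fun _ hw => (mem_ribbonBetween.1 hw).1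

lemma diag_le_of_mem_ribbonBetween {w : Node} (hw : w ∈ ribbonBetween τ u v) :
    u.2 - u.1 ≤ w.2 - w.1 ∧ w.2 - w.1 ≤ v.2 - v.1 := by
  obtain ⟨-, ⟨h₁, h₂⟩, ⟨h₃, h₄⟩, -⟩ := mem_ribbonBetween.1 hw
  omega

section Endpoints

variable (hτ : IsSkew τ) (hu : u ∈ τ) (hv : v ∈ τ) (hu₁₀ : u + (1, 0) ∉ τ)
  (hv₀₁ : v + (0, 1) ∉ τ)
include hτ hu hv hu₁₀ hv₀₁

lemma mem_ribbonBetween_of_diag {z : Node} (hz : z ∈ τ) (hz₁₁ : z + (1, 1) ∉ τ)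
    (hdu : u.2 - u.1 ≤ z.2 - z.1) (hdv : z.2 - z.1 ≤ v.2 - v.1) : z ∈ ribbonBetween τ u v := by
  refine mem_ribbonBetween.2 ⟨hz, ⟨?_, ?_⟩, ⟨?_, ?_⟩, hz₁₁⟩
  · by_contra! h
    exact hu₁₀ (hτ.add_mem hu hz zero_le_one le_rfl (by omega) (by omega))
  · by_contra! h
    exact hz₁₁ (hτ.add_one_one_mem hz hu (by omega) h)
  · by_contra! h
    exact hz₁₁ (hτ.add_one_one_mem hz hv h (by omega))
  · by_contra! h
    exact hv₀₁ (hτ.add_mem hv hz le_rfl zero_le_one (by omega) (by omega))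

lemma seRemovable_ribbonBetween : SERemovable τ (ribbonBetween τ u v) := by
  refine ⟨ribbonBetween_subset, fun w hw c hc hwc => ?_⟩
  obtain ⟨hwτ, ⟨hw₁, hw₂⟩, ⟨hw₃, -⟩, hw₁₁⟩ := mem_ribbonBetween.1 hw
  obtain ⟨hcτ, hcξ⟩ := mem_sdiff.1 hc
  obtain ⟨hwc₁, hwc₂⟩ := hwc
  refine hcξ (mem_ribbonBetween.2 ⟨hcτ, ⟨?_, hw₂.trans hwc₂⟩, ⟨hw₃.trans hwc₁, ?_⟩, fun hc₁₁ => ?_⟩)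
  · by_contra! h
    exact hu₁₀ (hτ.add_mem hu hcτ zero_le_one le_rfl (by omega) (by omega))
  · by_contra! h
    exact hv₀₁ (hτ.add_mem hv hcτ le_rfl zero_le_one (by omega) (by omega))
  · exact hw₁₁ (hτ.add_mem hwτ hc₁₁ zero_le_one zero_le_one
      (by simp only [Prod.fst_add]; omega) (by simp only [Prod.snd_add]; omega))

lemma isRibbon_ribbonBetween (huv : PathIn τ u v) (hnuv : NEr u v) :
    IsRibbon (ribbonBetween τ u v) := by
  have hthin : Thin (ribbonBetween τ u v) :=
    thin_of_add_one_one_not_mem hτ ribbonBetween_subset fun _ hw => (mem_ribbonBetween.1 hw).2.2.2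
  have hskew : IsSkew (ribbonBetween τ u v) :=
    (seRemovable_ribbonBetween hτ hu hv hu₁₀ hv₀₁).isSkew hτ
  have hu₁₁ : u + (1, 1) ∉ τ := fun h =>
    hu₁₀ (hτ.add_mem hu h zero_le_one le_rfl (by simp) (by simp))
  refine ⟨⟨u, mem_ribbonBetween.2 ⟨hu, ⟨le_rfl, le_rfl⟩, hnuv, hu₁₁⟩⟩, hskew,
    hthin.isConnectedShape hskew fun a ha b hb d hda hdb => ?_, hthin⟩
  have ha' := diag_le_of_mem_ribbonBetween ha
  have hb' := diag_le_of_mem_ribbonBetween hb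
  obtain ⟨m, hm, rfl⟩ := huv.exists_mem_diag_eq hu (d := d) (by omega) (by omega)
  obtain ⟨z, hz, hzd, hz₁₁⟩ := exists_mem_diag_eq_add_one_one_not_mem hm
  exact ⟨z, mem_ribbonBetween_of_diag hτ hu hv hu₁₀ hv₀₁ hz hz₁₁ (by omega) (by omega), hzd⟩

end Endpoints

lemma IsRibbon.exists_eq_ribbonBetween (hτ : IsSkew τ) (hμ : IsRibbon μ)
    (hrem : SERemovable τ μ) :
    ∃ u v : Node, u ∈ τ ∧ v ∈ τ ∧ PathIn τ u v ∧ NEr u v ∧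
      u + (1, 0) ∉ τ ∧ v + (0, 1) ∉ τ ∧ μ = ribbonBetween τ u v := by
  obtain ⟨hne, hskew, hconn, hthin⟩ := hμ
  obtain ⟨u, hu, humin⟩ := μ.exists_min_image (fun w => w.2 - w.1) hne
  obtain ⟨v, hv, hvmax⟩ := μ.exists_max_image (fun w => w.2 - w.1) hne
  have hu₁₀ : u + (1, 0) ∉ τ := fun h => by
    have := humin _ (hrem.mem_of_se hu h ⟨by simp, by simp⟩)
    simp only [Prod.fst_add, Prod.snd_add] at this
    omega
  have hv₀₁ : v + (0, 1) ∉ τ := fun h => by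
    have := hvmax _ (hrem.mem_of_se hv h ⟨by simp, by simp⟩)
    simp only [Prod.fst_add, Prod.snd_add] at this
    omega
  have hμ₁₁ : ∀ w ∈ μ, w + (1, 1) ∉ τ := fun w hw h =>
    hthin.add_one_one_not_mem hw (hrem.mem_of_se hw h ⟨by simp, by simp⟩)
  refine ⟨u, v, hrem.1 hu, hrem.1 hv, (hconn u hu v hv).mono hrem.1,
    hthin.nEr_of_diag_le hskew hu hv (hvmax u hu), hu₁₀, hv₀₁, ?_⟩
  ext w
  refine ⟨fun hw => mem_ribbonBetween.2 ⟨hrem.1 hw, hthin.nEr_of_diag_le hskew hu hw (humin w hw),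
    hthin.nEr_of_diag_le hskew hw hv (hvmax w hw), hμ₁₁ w hw⟩, fun hw => ?_⟩
  obtain ⟨hwτ, -, -, hw₁₁⟩ := mem_ribbonBetween.1 hw
  obtain ⟨hdu, hdv⟩ := diag_le_of_mem_ribbonBetween hw
  obtain ⟨m, hm, hmd⟩ := (hconn u hu v hv).exists_mem_diag_eq hu hdu hdv
  rcases le_or_gt m.1 w.1 with h | h
  · exact hrem.mem_of_se hm hwτ ⟨h, by omega⟩
  · exact absurd (hτ.add_one_one_mem hwτ (hrem.1 hm) h (by omega)) hw₁₁

end Ribbons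

open Classical in
theorem stmt10 (τ : Finset Node) (hτ : IsSkew τ) (μ : Finset Node) :
    (IsRibbon μ ∧ SERemovable τ μ) ↔
      ∃ u v : Node, u ∈ τ ∧ v ∈ τ ∧ PathIn τ u v ∧ NEr u v ∧
        u + (1, 0) ∉ τ ∧ v + (0, 1) ∉ τ ∧
        μ = τ.filter (fun w => NEr u w ∧ NEr w v ∧ w + (1, 1) ∉ τ) := by
  constructor
  · rintro ⟨hμ, hrem⟩
    exact hμ.exists_eq_ribbonBetween hτ hrem
  · rintro ⟨u, v, hu, hv, huv, hnuv, hu₁₀, hv₀₁, rfl⟩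
    exact ⟨isRibbon_ribbonBetween hτ hu hv hu₁₀ hv₀₁ huv hnuv,
      seRemovable_ribbonBetween hτ hu hv hu₁₀ hv₀₁⟩
end
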